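/- Let n ≥ 5 be an integer, let g ∈ {1, −1}, and set x = p_n#/2 + g (note p_n#/2 is an odd positive integer and x > 106). Then p_n# < ∏_{p prime, p² ≤ x} p; that is, the product of all primes not exceeding √x strictly exceeds the primorial p_n#. -/
import Mathlib


open Finset

/-- `primorial' n = pₙ# = ∏_{i=1}^{n} pᵢ`, the product of the first `n` primes. -/
noncomputable def primorial' (n : ℕ) : ℕ := ∏ i ∈ Finset.range n, Nat.nth Nat.Prime i

lemma nth_prime_pos (n : ℕ) : 0 < Nat.nth Nat.Prime n :=
  (Nat.prime_nth_prime n).pos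

lemma nth_prime_succ_le {n p : ℕ} (hp : p.Prime) (h : Nat.nth Nat.Prime n < p) :
    Nat.nth Nat.Prime (n + 1) ≤ p := by
  have h1 : n < Nat.count Nat.Prime p :=
    (Nat.lt_nth_iff_count_lt Nat.infinite_setOf_prime).2 h
  calc Nat.nth Nat.Prime (n + 1) ≤ Nat.nth Nat.Prime (Nat.count Nat.Prime p) :=
        Nat.nth_monotone Nat.infinite_setOf_prime h1
    _ = p := Nat.nth_count hp

lemma nth_prime_succ_lt_two_mul (n : ℕ) :
    Nat.nth Nat.Prime (n + 1) ≤ 2 * Nat.nth Nat.Prime n := by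
  obtain ⟨p, pp, h1, h2⟩ := Nat.exists_prime_lt_and_le_two_mul (Nat.nth Nat.Prime n)
    (nth_prime_pos n).ne'
  exact (nth_prime_succ_le pp h1).trans h2

lemma nth5 : Nat.nth Nat.Prime 5 = 13 := by
  have := Nat.nth_count (p := Nat.Prime) (n := 13) (by norm_num)
  rwa [show Nat.count Nat.Prime 13 = 5 by decide] at this

lemma prim5 : primorial' 5 = 2310 := by
  have h0 := Nat.nth_count (p := Nat.Prime) (n := 2) (by norm_num)
  have h1 := Nat.nth_count (p := Nat.Prime) (n := 3) (by norm_num)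
  have h2 := Nat.nth_count (p := Nat.Prime) (n := 5) (by norm_num)
  have h3 := Nat.nth_count (p := Nat.Prime) (n := 7) (by norm_num)
  have h4 := Nat.nth_count (p := Nat.Prime) (n := 11) (by norm_num)
  rw [show Nat.count Nat.Prime 2 = 0 by decide] at h0
  rw [show Nat.count Nat.Prime 3 = 1 by decide] at h1
  rw [show Nat.count Nat.Prime 5 = 2 by decide] at h2
  rw [show Nat.count Nat.Prime 7 = 3 by decide] at h3
  rw [show Nat.count Nat.Prime 11 = 4 by decide] at h4
  simp [primorial', Finset.prod_range_succ, h0, h1, h2, h3, h4]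

lemma key (n : ℕ) (hn : 5 ≤ n) : 2 * (Nat.nth Nat.Prime n) ^ 2 + 2 ≤ primorial' n := by
  induction n, hn using Nat.le_induction with
  | base => rw [nth5, prim5]; norm_num
  | succ n hn ih =>
    have h13 : 13 ≤ Nat.nth Nat.Prime n := by
      rw [← nth5]; exact Nat.nth_monotone Nat.infinite_setOf_prime hn
    have hb := nth_prime_succ_lt_two_mul n
    have hstep : primorial' (n + 1) = primorial' n * Nat.nth Nat.Prime n := by
      simp [primorial', Finset.prod_range_succ]
    rw [hstep]
    have h1 : 2 * (Nat.nth Nat.Prime (n + 1)) ^ 2 + 2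
        ≤ 8 * (Nat.nth Nat.Prime n) ^ 2 + 2 := by nlinarith
    have h2 : (2 * (Nat.nth Nat.Prime n) ^ 2 + 2) * Nat.nth Nat.Prime n
        ≤ primorial' n * Nat.nth Nat.Prime n :=
      Nat.mul_le_mul_right _ ih
    nlinarith

/-- For `n ≥ 5` and `x = pₙ#/2 + g` with `g = ±1`, the product of all primes `p`
with `p² ≤ x` strictly exceeds `pₙ#`. -/
theorem statement11 (n : ℕ) (hn : 5 ≤ n) (g : ℤ) (hg : g = 1 ∨ g = -1) (x : ℕ)
    (hx : (x : ℤ) = (primorial' n : ℤ) / 2 + g) :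
    (primorial' n : ℤ) <
      ∏ p ∈ (Finset.range (x + 1)).filter (fun p => p.Prime ∧ p ^ 2 ≤ x), (p : ℤ) := by
  -- 2 divides primorial' n
  have h2dvd : 2 ∣ primorial' n := by
    have h0 : Nat.nth Nat.Prime 0 = 2 := Nat.nth_prime_zero_eq_two
    have : Nat.nth Nat.Prime 0 ∣ primorial' n :=
      Finset.dvd_prod_of_mem _ (Finset.mem_range.2 (by omega))
    rwa [h0] at this
  have hkey := key n hn
  -- (nth n)^2 ≤ x
  have hsq : (Nat.nth Nat.Prime n) ^ 2 ≤ x := by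
    have h2dvd' : (2 : ℤ) ∣ (primorial' n : ℤ) := by exact_mod_cast h2dvd
    have hdiv : (primorial' n : ℤ) / 2 * 2 = (primorial' n : ℤ) :=
      Int.ediv_mul_cancel h2dvd'
    have hkey' : 2 * ((Nat.nth Nat.Prime n : ℤ)) ^ 2 + 2 ≤ (primorial' n : ℤ) := by
      exact_mod_cast hkey
    have : ((Nat.nth Nat.Prime n : ℤ)) ^ 2 ≤ (x : ℤ) := by
      rcases hg with rfl | rfl <;> nlinarith [hx]
    exact_mod_cast this
  -- the image of range (n+1) under nth Prime is a subset of the filter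
  set F := (Finset.range (x + 1)).filter (fun p => p.Prime ∧ p ^ 2 ≤ x) with hF
  have hinj : Set.InjOn (Nat.nth Nat.Prime) (Finset.range (n + 1)) :=
    fun a _ b _ h => (Nat.nth_injective Nat.infinite_setOf_prime) h
  have hsub : (Finset.range (n + 1)).image (Nat.nth Nat.Prime) ⊆ F := by
    intro p hp
    obtain ⟨i, hi, rfl⟩ := Finset.mem_image.1 hp
    have hi' : i ≤ n := Nat.lt_succ_iff.1 (Finset.mem_range.1 hi)
    have hmono : Nat.nth Nat.Prime i ≤ Nat.nth Nat.Prime n :=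
      Nat.nth_monotone Nat.infinite_setOf_prime hi'
    have hsq' : (Nat.nth Nat.Prime i) ^ 2 ≤ x :=
      le_trans (Nat.pow_le_pow_left hmono 2) hsq
    have hle : Nat.nth Nat.Prime i ≤ x :=
      le_trans (Nat.le_self_pow (by norm_num) _) hsq'
    exact Finset.mem_filter.2 ⟨Finset.mem_range.2 (by omega),
      Nat.prime_nth_prime i, hsq'⟩
  -- product over image = primorial' (n+1)
  have himg : ∏ p ∈ (Finset.range (n + 1)).image (Nat.nth Nat.Prime), p
      = primorial' (n + 1) := by
    rw [Finset.prod_image hinj]; rfl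
  have hmono : primorial' (n + 1) ≤ ∏ p ∈ F, p := by
    rw [← himg]
    refine Finset.prod_le_prod_of_subset_of_one_le' hsub ?_
    intro p hp _
    exact (Finset.mem_filter.1 hp).2.1.one_lt.le
  have hlt : primorial' n < primorial' (n + 1) := by
    have hstep : primorial' (n + 1) = primorial' n * Nat.nth Nat.Prime n := by
      simp [primorial', Finset.prod_range_succ]
    have hpos : 0 < primorial' n :=
      Finset.prod_pos fun i _ => nth_prime_pos i
    rw [hstep]
    have h2 := (Nat.prime_nth_prime n).one_lt; nlinarith
  have : primorial' n < ∏ p ∈ F, p := lt_of_lt_of_le hlt hmono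
  calc (primorial' n : ℤ) < ((∏ p ∈ F, p : ℕ) : ℤ) := by exact_mod_cast this
    _ = ∏ p ∈ F, (p : ℤ) := by push_cast; rfl
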